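/- arXiv:1712.01324 — 3 statements merged into one kernel-verified Lean document; each statement's English description precedes it below -/
import Mathlib

section
/- For all real a, x and every integer n ≥ 0, the falling (p,q)-power expands as (a ⊖ x)_{p,q}^n = ∑_{k=0}^{n} [n choose k]_{p,q} q^{k(k−1)/2} p^{(n−k)(n−k−1)/2} (−x)^k a^{n−k}. -/
noncomputable section
open Finset Polynomial

/-- The (p,q)-number `[n]_{p,q} = (p^n - q^n)/(p - q)`. -/
def pqNum (p q : ℝ) (n : ℕ) : ℝ := (p ^ n - q ^ n) / (p - q)

/-- The (p,q)-factorial `[n]_{p,q}! = ∏_{k=1}^n [k]_{p,q}`. -/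
def pqFact (p q : ℝ) (n : ℕ) : ℝ := ∏ k ∈ Finset.Icc 1 n, pqNum p q k

/-- The (p,q)-binomial coefficient. -/
def pqBinom (p q : ℝ) (n k : ℕ) : ℝ := pqFact p q n / (pqFact p q k * pqFact p q (n - k))

/-- The (p,q)-derivative on polynomials: the linear operator with `D(X^n) = [n]_{p,q} X^(n-1)`. -/
def pqDeriv (p q : ℝ) (f : Polynomial ℝ) : Polynomial ℝ :=
  f.sum fun n a => Polynomial.C (a * pqNum p q n) * Polynomial.X ^ (n - 1)

/-- The (p,q)-derivative on formal power series, acting coefficientwise by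
`D(X^n) = [n]_{p,q} X^(n-1)`. -/
def pqDerivPS (p q : ℝ) (f : PowerSeries ℝ) : PowerSeries ℝ :=
  PowerSeries.mk fun n => pqNum p q (n + 1) * PowerSeries.coeff (n + 1) f

/-- The double (p,q)-factorial `[2m]_{p,q}!! = ∏_{k=1}^m [2k]_{p,q}`. -/
def pqDoubleFact (p q : ℝ) (m : ℕ) : ℝ := ∏ k ∈ Finset.Icc 1 m, pqNum p q (2 * k)

/-- A sequence of real polynomials of exact degree `n` is (p,q)-Appell when
`D_{p,q} f_{n+1}(x) = [n+1]_{p,q} f_n(p x)` for all `n ≥ 0` and all `x`. -/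
def IsPQAppell (p q : ℝ) (f : ℕ → Polynomial ℝ) : Prop :=
  (∀ n, (f n).natDegree = n) ∧
    ∀ (n : ℕ) (x : ℝ), (pqDeriv p q (f (n + 1))).eval x = pqNum p q (n + 1) * (f n).eval (p * x)

/-! Induction on `n`: multiplying the expansion of `(a ⊖ x)_{p,q}^n` by the factor
`a p^n - q^n x` and collecting the coefficient of `(-x)^(k+1) a^(n-k)` reduces the step to the
(p,q)-Pascal rule `[n+1, k+1] = p^(k+1) [n, k+1] + q^(n-k) [n, k]`, which in turn comes from
`[m + j]_{p,q} = p^m [j]_{p,q} + q^j [m]_{p,q}`. -/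

lemma pqNum_add (p q : ℝ) (m n : ℕ) :
    pqNum p q (m + n) = p ^ m * pqNum p q n + q ^ n * pqNum p q m := by
  simp only [pqNum]
  ring

lemma pqNum_pos {p q : ℝ} (hq : 0 ≤ q) (hpq : q < p) {n : ℕ} (hn : n ≠ 0) :
    0 < pqNum p q n :=
  div_pos (sub_pos.2 (pow_lt_pow_left₀ hpq hq hn)) (sub_pos.2 hpq)

@[simp]
lemma pqFact_zero (p q : ℝ) : pqFact p q 0 = 1 := rfl

lemma pqFact_succ (p q : ℝ) (n : ℕ) : pqFact p q (n + 1) = pqFact p q n * pqNum p q (n + 1) :=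
  prod_Icc_succ_top (Nat.le_add_left 1 n) _

lemma pqFact_pos {p q : ℝ} (hq : 0 ≤ q) (hpq : q < p) (n : ℕ) : 0 < pqFact p q n :=
  prod_pos fun _ hk => pqNum_pos hq hpq (Nat.one_le_iff_ne_zero.1 (mem_Icc.1 hk).1)

def fallingPowerTerm (p q a x : ℝ) (n k : ℕ) : ℝ :=
  pqBinom p q n k * q ^ (k * (k - 1) / 2) * p ^ ((n - k) * (n - k - 1) / 2) *
    (-x) ^ k * a ^ (n - k)

section NonvanishingFactorials

variable {p q : ℝ} (hfact : ∀ m, pqFact p q m ≠ 0)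
include hfact

lemma pqBinom_zero_right (n : ℕ) : pqBinom p q n 0 = 1 := by
  simp [pqBinom, hfact n]

lemma pqBinom_self (n : ℕ) : pqBinom p q n n = 1 := by
  simp [pqBinom, hfact n]

lemma pqBinom_succ_succ {n k : ℕ} (hk : k < n) :
    pqBinom p q (n + 1) (k + 1) =
      p ^ (k + 1) * pqBinom p q n (k + 1) + q ^ (n - k) * pqBinom p q n k := by
  obtain ⟨j, rfl⟩ : ∃ j, n = k + 1 + j := ⟨n - (k + 1), by omega⟩
  have hnum_k : pqNum p q (k + 1) ≠ 0 :=
    right_ne_zero_of_mul (pqFact_succ p q k ▸ hfact (k + 1))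
  have hnum_j : pqNum p q (j + 1) ≠ 0 :=
    right_ne_zero_of_mul (pqFact_succ p q j ▸ hfact (j + 1))
  unfold pqBinom
  rw [show k + 1 + j + 1 - (k + 1) = j + 1 by omega, show k + 1 + j - (k + 1) = j by omega,
    show k + 1 + j - k = j + 1 by omega, pqFact_succ p q (k + 1 + j), pqFact_succ p q j,
    pqFact_succ p q k, show k + 1 + j + 1 = (k + 1) + (j + 1) by omega, pqNum_add]
  field_simp [hfact k, hfact j]

variable (a x : ℝ) (n : ℕ)

lemma fallingPowerTerm_succ_zero :
    fallingPowerTerm p q a x (n + 1) 0 = a * p ^ n * fallingPowerTerm p q a x n 0 := by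
  simp only [fallingPowerTerm, pqBinom_zero_right hfact, Nat.sub_zero, Nat.triangle_succ]
  ring

lemma fallingPowerTerm_succ_self :
    fallingPowerTerm p q a x (n + 1) (n + 1) = -(q ^ n * x) * fallingPowerTerm p q a x n n := by
  simp only [fallingPowerTerm, pqBinom_self hfact, Nat.sub_self, Nat.triangle_succ]
  ring

lemma fallingPowerTerm_succ_succ {k : ℕ} (hk : k < n) :
    fallingPowerTerm p q a x (n + 1) (k + 1) =
      a * p ^ n * fallingPowerTerm p q a x n (k + 1) +
        -(q ^ n * x) * fallingPowerTerm p q a x n k := by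
  obtain ⟨m, rfl⟩ : ∃ m, n = k + 1 + m := ⟨n - (k + 1), by omega⟩
  simp only [fallingPowerTerm, pqBinom_succ_succ hfact hk,
    show k + 1 + m + 1 - (k + 1) = m + 1 by omega, show k + 1 + m - (k + 1) = m by omega,
    show k + 1 + m - k = m + 1 by omega, Nat.triangle_succ]
  ring

end NonvanishingFactorials

lemma sum_range_succ_eq_mul_of_recurrence {R : Type*} [CommSemiring R] {s t : ℕ → R} {α β : R}
    {n : ℕ} (h_first : s 0 = α * t 0) (h_succ : ∀ k < n, s (k + 1) = α * t (k + 1) + β * t k)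
    (h_last : s (n + 1) = β * t n) :
    ∑ k ∈ range (n + 2), s k = (α + β) * ∑ k ∈ range (n + 1), t k :=
  calc ∑ k ∈ range (n + 2), s k = s 0 + ∑ k ∈ range n, s (k + 1) + s (n + 1) := by
        rw [sum_range_succ', sum_range_succ]; ring
    _ = α * (∑ k ∈ range n, t (k + 1) + t 0) + β * (∑ k ∈ range n, t k + t n) := by
        rw [sum_congr rfl fun k hk => h_succ k (mem_range.1 hk), sum_add_distrib, ← mul_sum,
          ← mul_sum, h_first, h_last]; ring
    _ = (α + β) * ∑ k ∈ range (n + 1), t k := by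
        rw [← sum_range_succ', ← sum_range_succ]; ring

/-- the expansion of the falling (p,q)-power. -/
theorem pq_falling_power_expansion (p q : ℝ) (hq : 0 < q) (hpq : q < p) (a x : ℝ) (n : ℕ) :
    (∏ j ∈ Finset.range n, (a * p ^ j - q ^ j * x)) =
      ∑ k ∈ Finset.range (n + 1),
        pqBinom p q n k * q ^ (k * (k - 1) / 2) * p ^ ((n - k) * (n - k - 1) / 2) *
          (-x) ^ k * a ^ (n - k) := by
  have hfact : ∀ m, pqFact p q m ≠ 0 := fun m => (pqFact_pos hq.le hpq m).ne'
  change _ = ∑ k ∈ range (n + 1), fallingPowerTerm p q a x n k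
  induction n with
  | zero => simp [fallingPowerTerm, pqBinom]
  | succ n ih =>
    rw [prod_range_succ, ih, sum_range_succ_eq_mul_of_recurrence
      (fallingPowerTerm_succ_zero hfact a x n) (fun k => fallingPowerTerm_succ_succ hfact a x n)
      (fallingPowerTerm_succ_self hfact a x n)]
    ring
end
end

section
/- Let (f_n) and (g_n) be (p,q)-Appell polynomial sequences with coefficient sequences (a_k) and (b_k), i.e. f_n(x) = ∑_{k=0}^{n} [n choose k]_{p,q} p^{(n−k)(n−k−1)/2} a_k x^{n−k} with a_0 ≠ 0 and g_n(x) = ∑_{k=0}^{n} [n choose k]_{p,q} p^{(n−k)(n−k−1)/2} b_k x^{n−k} with b_0 ≠ 0. Then the product sequence (f∗g)_n(x) := ∑_{k=0}^{n} [n choose k]_{p,q} a_{n−k} g_k(x) satisfies (f∗g)_n(x) = ∑_{k=0}^{n} [n choose k]_{p,q} p^{(n−k)(n−k−1)/2} c_k x^{n−k}, where c_n = ∑_{j=0}^{n} [n choose j]_{p,q} a_j b_{n−j}; in particular (f∗g)_n is a (p,q)-Appell polynomial sequence (its determining coefficients are the (p,q)-binomial convolution of those of f and g). -/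
noncomputable section
open Finset Polynomial

/-!
Writing `[n]!` for `pqFact p q n`, both sides expand to the sum over `i + j + l = n` of
`[n]! / ([i]! [j]! [l]!) * a i * b j * p ^ (l (l - 1) / 2) * x ^ l`: on each side the product of
two nested (p,q)-binomial coefficients is this (p,q)-trinomial coefficient, so the identity is
a reindexing of that triple sum.
-/

-- Both sides sum `F i j l` over `i + j + l = n`.
theorem Finset.sum_range_sum_range_triple_reindex {M : Type*} [AddCommMonoid M] (n : ℕ)
    (F : ℕ → ℕ → ℕ → M) :
    ∑ k ∈ range (n + 1), ∑ j ∈ range (k + 1), F (n - k) j (k - j) =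
      ∑ m ∈ range (n + 1), ∑ i ∈ range (m + 1), F i (m - i) (n - m) := by
  rw [sum_sigma', sum_sigma']
  refine sum_nbij' (fun s ↦ ⟨n - s.1 + s.2, n - s.1⟩) (fun s ↦ ⟨n - s.2, s.1 - s.2⟩)
    ?_ ?_ ?_ ?_ ?_ <;>
  rintro ⟨k, j⟩ hs <;>
  simp only [mem_sigma, mem_range, Sigma.mk.injEq] at hs ⊢
  · omega
  · omega
  · exact ⟨by omega, heq_of_eq (by omega)⟩
  · exact ⟨by omega, heq_of_eq (by omega)⟩
  · congr 1 <;> omega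

lemma pqBinom_mul_pqBinom {p q : ℝ} (n : ℕ) {k : ℕ} (j : ℕ) (hk : pqFact p q k ≠ 0) :
    pqBinom p q n k * pqBinom p q k j =
      pqFact p q n / (pqFact p q (n - k) * pqFact p q j * pqFact p q (k - j)) := by
  unfold pqBinom
  rw [div_mul_div_comm, mul_comm (pqFact p q k), mul_right_comm _ (pqFact p q k),
    mul_div_mul_right _ _ hk, mul_assoc]

theorem pq_appell_star_product_general (p q : ℝ) (hq : 0 < q) (hpq : q < p)
    (a b : ℕ → ℝ)
    (g : ℕ → ℝ → ℝ)
    (hg : ∀ (n : ℕ) (x : ℝ), g n x = ∑ k ∈ Finset.range (n + 1),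
      pqBinom p q n k * p ^ ((n - k) * (n - k - 1) / 2) * b k * x ^ (n - k)) :
    ∀ (n : ℕ) (x : ℝ),
      (∑ k ∈ Finset.range (n + 1), pqBinom p q n k * a (n - k) * g k x)
        = ∑ k ∈ Finset.range (n + 1),
            pqBinom p q n k * p ^ ((n - k) * (n - k - 1) / 2) *
              (∑ j ∈ Finset.range (k + 1), pqBinom p q k j * a j * b (k - j)) * x ^ (n - k) := by
  intro n x
  have hfact (k : ℕ) : pqFact p q k ≠ 0 := (pqFact_pos hq.le hpq k).ne'
  let T (i j l : ℕ) : ℝ := pqFact p q n / (pqFact p q i * pqFact p q j * pqFact p q l) *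
    a i * b j * (p ^ (l * (l - 1) / 2) * x ^ l)
  calc ∑ k ∈ range (n + 1), pqBinom p q n k * a (n - k) * g k x
      = ∑ k ∈ range (n + 1), ∑ j ∈ range (k + 1), T (n - k) j (k - j) := by
        refine sum_congr rfl fun k _ ↦ ?_
        rw [hg, mul_sum]
        refine sum_congr rfl fun j _ ↦ ?_
        linear_combination a (n - k) * b j * p ^ ((k - j) * (k - j - 1) / 2) * x ^ (k - j) *
          pqBinom_mul_pqBinom n j (hfact k)
    _ = ∑ m ∈ range (n + 1), ∑ i ∈ range (m + 1), T i (m - i) (n - m) :=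
        sum_range_sum_range_triple_reindex n T
    _ = _ := by
        refine sum_congr rfl fun m _ ↦ ?_
        rw [mul_sum, sum_mul]
        refine sum_congr rfl fun i _ ↦ ?_
        linear_combination a i * b (m - i) * p ^ ((n - m) * (n - m - 1) / 2) * x ^ (n - m) *
          (pqBinom_mul_pqBinom n i (hfact m)).symm

/-- the *-product of two (p,q)-Appell sequences is the (p,q)-Appell sequence
whose coefficients are the (p,q)-binomial convolution of the original coefficient sequences. -/
theorem pq_appell_star_product (p q : ℝ) (hq : 0 < q) (hpq : q < p)
    (a b : ℕ → ℝ) (ha : a 0 ≠ 0) (hb : b 0 ≠ 0)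
    (f g : ℕ → ℝ → ℝ)
    (hf : ∀ (n : ℕ) (x : ℝ), f n x = ∑ k ∈ Finset.range (n + 1),
      pqBinom p q n k * p ^ ((n - k) * (n - k - 1) / 2) * a k * x ^ (n - k))
    (hg : ∀ (n : ℕ) (x : ℝ), g n x = ∑ k ∈ Finset.range (n + 1),
      pqBinom p q n k * p ^ ((n - k) * (n - k - 1) / 2) * b k * x ^ (n - k)) :
    ∀ (n : ℕ) (x : ℝ),
      (∑ k ∈ Finset.range (n + 1), pqBinom p q n k * a (n - k) * g k x)
        = ∑ k ∈ Finset.range (n + 1),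
            pqBinom p q n k * p ^ ((n - k) * (n - k - 1) / 2) *
              (∑ j ∈ Finset.range (k + 1), pqBinom p q k j * a j * b (k - j)) * x ^ (n - k) :=
  pq_appell_star_product_general p q hq hpq a b g hg
end
end

section
/- Every (p,q)-Appell polynomial sequence has a ∗-inverse: if (f_n) is a (p,q)-Appell sequence with coefficient sequence (a_k), a_0 ≠ 0 (so f_n(x) = ∑_{k=0}^{n} [n choose k]_{p,q} p^{(n−k)(n−k−1)/2} a_k x^{n−k}), then there exists a sequence (b_k) with b_0 ≠ 0 such that ∑_{k=0}^{n} [n choose k]_{p,q} a_k b_{n−k} equals 1 for n = 0 and 0 for all n ≥ 1; consequently the (p,q)-Appell sequence g with coefficients (b_k) satisfies (f∗g)_n(x) = (g∗f)_n(x) = p^{n(n−1)/2} x^n for all n, i.e. f∗g = g∗f = I, where I is the identity (p,q)-Appell sequence I_n(x) = p^{n(n−1)/2} x^n. -/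
noncomputable section
open Finset Polynomial

/-!
Attach to a sequence `c` its (p,q)-exponential generating function `∑ c_k / [k]_{p,q}! X^k`.
Since `[n choose k]_{p,q} = [n]! / ([k]! [n-k]!)`, the (p,q)-binomial convolution of two sequences
is `[n]!` times the `n`-th coefficient of the product of their generating functions, and the
(p,q)-Appell polynomial with coefficients `c` is the convolution of `c` with the sequence
`p^(m(m-1)/2) x^m`. Hence `∗`-inverting an Appell sequence amounts to inverting the generating
function of its coefficients, which is possible in `ℝ⟦X⟧` because its constant term `a_0` is
nonzero; the `∗`-products then collapse to the generating function of `p^(n(n-1)/2) x^n`.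
-/

open PowerSeries

namespace PQAppell

variable {p q : ℝ}

lemma pqNum_pos (hq : 0 ≤ q) (hpq : q < p) {k : ℕ} (hk : k ≠ 0) : 0 < pqNum p q k :=
  div_pos (sub_pos.mpr (pow_lt_pow_left₀ hpq hq hk)) (sub_pos.mpr hpq)

lemma pqFact_ne_zero (hq : 0 ≤ q) (hpq : q < p) (n : ℕ) : pqFact p q n ≠ 0 :=
  (prod_pos fun _ hk => pqNum_pos hq hpq (by simp only [mem_Icc] at hk; omega)).ne'

@[simp]
lemma pqFact_zero : pqFact p q 0 = 1 := by
  simp [pqFact]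

variable (p q)

def pqEgf (c : ℕ → ℝ) : ℝ⟦X⟧ :=
  PowerSeries.mk fun k => c k / pqFact p q k

-- The (p,q)-exponential `e_{p,q}(x t)`, generating function of the identity sequence `I_n(x)`.
def pqExpSeries (x : ℝ) : ℝ⟦X⟧ :=
  pqEgf p q fun m => p ^ (m * (m - 1) / 2) * x ^ m

def pqAppell (c : ℕ → ℝ) (n : ℕ) (x : ℝ) : ℝ :=
  ∑ j ∈ range (n + 1), pqBinom p q n j * p ^ ((n - j) * (n - j - 1) / 2) * c j * x ^ (n - j)

variable {p q}

@[simp]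
lemma coeff_pqEgf (c : ℕ → ℝ) (k : ℕ) : coeff k (pqEgf p q c) = c k / pqFact p q k :=
  coeff_mk _ _

lemma pqEgf_pqFact_mul_coeff (hq : 0 ≤ q) (hpq : q < p) (F : ℝ⟦X⟧) :
    pqEgf p q (fun n => pqFact p q n * coeff n F) = F := by
  ext n
  rw [coeff_pqEgf, mul_div_cancel_left₀ _ (pqFact_ne_zero hq hpq n)]

lemma sum_pqBinom_mul (hq : 0 ≤ q) (hpq : q < p) (c d : ℕ → ℝ) (n : ℕ) :
    ∑ k ∈ range (n + 1), pqBinom p q n k * c k * d (n - k)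
      = pqFact p q n * coeff n (pqEgf p q c * pqEgf p q d) := by
  have hF := pqFact_ne_zero hq hpq (p := p) (q := q)
  rw [PowerSeries.coeff_mul, Nat.sum_antidiagonal_eq_sum_range_succ_mk, mul_sum]
  refine sum_congr rfl fun k _ => ?_
  simp only [coeff_pqEgf, pqBinom]
  field_simp

lemma pqAppell_eq_pqFact_mul_coeff (hq : 0 ≤ q) (hpq : q < p) (c : ℕ → ℝ) (n : ℕ) (x : ℝ) :
    pqAppell p q c n x = pqFact p q n * coeff n (pqEgf p q c * pqExpSeries p q x) := by
  rw [pqExpSeries, ← sum_pqBinom_mul hq hpq]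
  exact sum_congr rfl fun _ _ => by ring

lemma pqFact_mul_coeff_pqExpSeries (hq : 0 ≤ q) (hpq : q < p) (n : ℕ) (x : ℝ) :
    pqFact p q n * coeff n (pqExpSeries p q x) = p ^ (n * (n - 1) / 2) * x ^ n := by
  rw [pqExpSeries, coeff_pqEgf, mul_div_cancel₀ _ (pqFact_ne_zero hq hpq n)]

theorem sum_pqBinom_mul_pqAppell_of_pqEgf_mul_eq_one (hq : 0 ≤ q) (hpq : q < p)
    {c d : ℕ → ℝ} (hcd : pqEgf p q c * pqEgf p q d = 1) (n : ℕ) (x : ℝ) :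
    ∑ k ∈ range (n + 1), pqBinom p q n k * c (n - k) * pqAppell p q d k x
      = p ^ (n * (n - 1) / 2) * x ^ n := by
  have hAppell : pqEgf p q (fun k => pqAppell p q d k x) = pqEgf p q d * pqExpSeries p q x := by
    simp only [pqAppell_eq_pqFact_mul_coeff hq hpq]
    exact pqEgf_pqFact_mul_coeff hq hpq _
  calc ∑ k ∈ range (n + 1), pqBinom p q n k * c (n - k) * pqAppell p q d k x
      = ∑ k ∈ range (n + 1), pqBinom p q n k * pqAppell p q d k x * c (n - k) :=
        sum_congr rfl fun _ _ => by ring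
    _ = pqFact p q n * coeff n (pqEgf p q c * pqEgf p q d * pqExpSeries p q x) := by
        rw [sum_pqBinom_mul hq hpq, hAppell, mul_comm _ (pqEgf p q c), ← mul_assoc]
    _ = p ^ (n * (n - 1) / 2) * x ^ n := by
        rw [hcd, one_mul, pqFact_mul_coeff_pqExpSeries hq hpq]

end PQAppell

open PQAppell

/-- every (p,q)-Appell sequence has a *-inverse, with the identity sequence
I_n(x) = p^(n(n-1)/2) x^n. -/
theorem pq_appell_star_inverse (p q : ℝ) (hq : 0 < q) (hpq : q < p)
    (a : ℕ → ℝ) (ha : a 0 ≠ 0)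
    (f : ℕ → ℝ → ℝ)
    (hf : ∀ (n : ℕ) (x : ℝ), f n x = ∑ k ∈ Finset.range (n + 1),
      pqBinom p q n k * p ^ ((n - k) * (n - k - 1) / 2) * a k * x ^ (n - k)) :
    ∃ b : ℕ → ℝ, b 0 ≠ 0 ∧
      (∀ n : ℕ, ∑ k ∈ Finset.range (n + 1), pqBinom p q n k * a k * b (n - k)
        = if n = 0 then 1 else 0) ∧
      ∀ (n : ℕ) (x : ℝ),
        (∑ k ∈ Finset.range (n + 1), pqBinom p q n k * a (n - k) *
            (∑ j ∈ Finset.range (k + 1),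
              pqBinom p q k j * p ^ ((k - j) * (k - j - 1) / 2) * b j * x ^ (k - j)))
          = p ^ (n * (n - 1) / 2) * x ^ n ∧
        (∑ k ∈ Finset.range (n + 1), pqBinom p q n k * b (n - k) * f k x)
          = p ^ (n * (n - 1) / 2) * x ^ n := by
  set A := pqEgf p q a
  have hA : constantCoeff A ≠ 0 := by
    simpa [A, ← coeff_zero_eq_constantCoeff_apply] using ha
  set b : ℕ → ℝ := fun n => pqFact p q n * coeff n A⁻¹
  have hB : pqEgf p q b = A⁻¹ := pqEgf_pqFact_mul_coeff hq.le hpq _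
  refine ⟨b, by simpa [b] using hA, fun n => ?_, fun n x => ⟨?_, ?_⟩⟩
  · rw [sum_pqBinom_mul hq.le hpq, hB, PowerSeries.mul_inv_cancel A hA, PowerSeries.coeff_one]
    split_ifs with hn
    · simp [hn]
    · simp
  · exact sum_pqBinom_mul_pqAppell_of_pqEgf_mul_eq_one hq.le hpq
      (by rw [hB]; exact PowerSeries.mul_inv_cancel A hA) n x
  · simp only [hf]
    exact sum_pqBinom_mul_pqAppell_of_pqEgf_mul_eq_one hq.le hpq
      (by rw [hB]; exact PowerSeries.inv_mul_cancel A hA) n x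
end
end
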